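/- arXiv:2407.05896 — 3 statements merged into one kernel-verified Lean document; each statement's English description precedes it below -/
import Mathlib

section
/- Let a, b ≥ 0 and let q_a, q_b be the Poisson quantile transforms. Then the comonotonic Poisson pair (q_a(U), q_b(U)), with U uniform on (0,1), satisfies ∫ q_a(u)·q_b(u) dμ(u) − (∫ q_a(u) dμ(u))·(∫ q_b(u) dμ(u)) = Σ_{m=0}^{∞} Σ_{n=0}^{∞} min{Ḡ_a(m), Ḡ_b(n)} − a·b; that is, the covariance of a comonotonic pair of Poisson random variables with means a and b equals Σ_{m,n ≥ 0} min{Ḡ_a(m), Ḡ_b(n)} − ab. -/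
open MeasureTheory

/-- The uniform probability measure on the open interval (0,1):
Lebesgue measure restricted to (0,1). -/
noncomputable def unif : Measure ℝ := volume.restrict (Set.Ioo (0 : ℝ) 1)

/-- The quantile transform of a cdf `F` on ℕ: `q_F(u) = min {n : u ≤ F n}`. -/
noncomputable def qt (F : ℕ → ℝ) (u : ℝ) : ℕ := sInf {n : ℕ | u ≤ F n}

/-- The Poisson(λ) cumulative distribution function on ℕ. -/
noncomputable def poisCdf (l : ℝ) (n : ℕ) : ℝ :=
  ∑ k ∈ Finset.range (n + 1), Real.exp (-l) * l ^ k / (Nat.factorial k)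

/-- The Poisson(λ) probability mass function on ℕ. -/
noncomputable def poisPmf (l : ℝ) (n : ℕ) : ℝ :=
  Real.exp (-l) * l ^ n / (Nat.factorial n)

/-- `F(n-1)` with the convention `F(-1) = 0`. -/
noncomputable def cdfm1 (F : ℕ → ℝ) (n : ℕ) : ℝ := if n = 0 then 0 else F (n - 1)

/-!
For `u < 1` the quantile transform has the layer-cake form `q_F(u) = Σ_m 1{F(m) < u}`, and the
product of two such sums is `Σ_{m,n} 1{max(F(m), G(n)) < u}`. Integrating term by term against the
uniform measure (in `ℝ≥0∞`, where sums may be exchanged freely) gives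
`E[q_F q_G] = Σ_{m,n} min(1 - F(m), 1 - G(n))` and `E[q_F] = Σ_m (1 - F(m))`. The latter tail sum
is `Σ_k k p(k)`, which for the Poisson law is its mean `λ`.
-/

open Filter Set ENNReal Topology MeasureTheory

theorem qt_le_iff {F : ℕ → ℝ} {u : ℝ} {n : ℕ} :
    qt F u ≤ n ↔ (∃ k ≤ n, u ≤ F k) ∨ ∀ k, F k < u := by
  rcases Set.eq_empty_or_nonempty {k | u ≤ F k} with h | h
  · have hlt : ∀ k, F k < u := fun k => by simpa using Set.eq_empty_iff_forall_notMem.1 h k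
    simp [qt, h, hlt]
  · obtain ⟨k, hk⟩ := h
    have hnlt : ¬ ∀ k, F k < u := fun hlt => (hlt k).not_ge hk
    simp only [hnlt, or_false]
    exact ⟨fun h' => ⟨_, h', Nat.sInf_mem ⟨k, hk⟩⟩, fun ⟨j, hj, hju⟩ => (Nat.sInf_le hju).trans hj⟩

theorem lt_qt_iff {F : ℕ → ℝ} (hF : Monotone F) {u : ℝ} (hu : ∃ k, u ≤ F k) {n : ℕ} :
    n < qt F u ↔ F n < u := by
  rw [← not_le, qt_le_iff, not_or, not_exists]
  simp only [not_and, not_le, not_forall, not_lt]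
  exact ⟨fun h => h.1 n le_rfl, fun h => ⟨fun k hk => (hF hk).trans_lt h, hu⟩⟩

theorem measurable_qt (F : ℕ → ℝ) : Measurable (qt F) := by
  refine measurable_of_Iic fun n => ?_
  have hpre : qt F ⁻¹' Iic n = (⋃ k ∈ Iic n, Iic (F k)) ∪ ⋂ k, Ioi (F k) := by
    ext u; simp [qt_le_iff]
  rw [hpre]
  measurability

theorem ENNReal.tsum_ite_lt (k : ℕ) (c : ℝ≥0∞) : ∑' n : ℕ, (if n < k then c else 0) = k * c := by
  rw [tsum_eq_sum (s := Finset.range k) (by simp +contextual)]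
  simp [Finset.sum_ite_of_true]

theorem natCast_qt_eq_tsum_indicator {F : ℕ → ℝ} (hF : Monotone F) {u : ℝ} (hu : ∃ k, u ≤ F k) :
    (qt F u : ℝ≥0∞) = ∑' m, (Ioi (F m)).indicator 1 u := by
  simp_rw [indicator_apply, mem_Ioi, Pi.one_apply, ← lt_qt_iff hF hu, ENNReal.tsum_ite_lt, mul_one]

theorem unif_Ioi {c : ℝ} (hc : 0 ≤ c) : unif (Ioi c) = ENNReal.ofReal (1 - c) := by
  rw [unif, Measure.restrict_apply measurableSet_Ioi, Ioi_inter_Ioo, max_eq_left hc, Real.volume_Ioo]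

theorem lintegral_tsum_indicator_Ioi_unif {ι : Type*} [Countable ι] {c : ι → ℝ}
    (hc : ∀ i, 0 ≤ c i) :
    ∫⁻ u, ∑' i, (Ioi (c i)).indicator 1 u ∂unif = ∑' i, ENNReal.ofReal (1 - c i) := by
  rw [lintegral_tsum fun i => (measurable_one.indicator measurableSet_Ioi).aemeasurable]
  simp_rw [lintegral_indicator_one measurableSet_Ioi, unif_Ioi (hc _)]

theorem integral_natCast_eq_toReal_lintegral {α : Type*} [MeasurableSpace α] {μ : Measure α}
    {f : α → ℕ} (hf : Measurable f) :
    ∫ x, (f x : ℝ) ∂μ = (∫⁻ x, (f x : ℝ≥0∞) ∂μ).toReal := by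
  rw [← integral_toReal (by fun_prop) (.of_forall fun x => natCast_lt_top _)]
  simp

structure IsNatCdf (F : ℕ → ℝ) : Prop where
  mono : Monotone F
  nonneg : ∀ n, 0 ≤ F n
  tendsto_one : Tendsto F atTop (𝓝 1)

namespace IsNatCdf

variable {F G : ℕ → ℝ}

theorem le_one (hF : IsNatCdf F) (n : ℕ) : F n ≤ 1 :=
  hF.mono.ge_of_tendsto hF.tendsto_one n

theorem exists_le (hF : IsNatCdf F) {u : ℝ} (hu : u < 1) : ∃ k, u ≤ F k :=
  (hF.tendsto_one.eventually (eventually_gt_nhds hu)).exists.imp fun _ => le_of_lt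

theorem ae_natCast_qt_eq_tsum_indicator (hF : IsNatCdf F) :
    ∀ᵐ u ∂unif, (qt F u : ℝ≥0∞) = ∑' m, (Ioi (F m)).indicator 1 u :=
  (ae_restrict_mem measurableSet_Ioo).mono fun _ hu =>
    natCast_qt_eq_tsum_indicator hF.mono (hF.exists_le hu.2)

theorem lintegral_qt_unif (hF : IsNatCdf F) :
    ∫⁻ u, (qt F u : ℝ≥0∞) ∂unif = ∑' m, ENNReal.ofReal (1 - F m) := by
  rw [lintegral_congr_ae hF.ae_natCast_qt_eq_tsum_indicator,
    lintegral_tsum_indicator_Ioi_unif hF.nonneg]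

theorem integral_qt_mul_qt_unif (hF : IsNatCdf F) (hG : IsNatCdf G) :
    ∫ u, (qt F u : ℝ) * (qt G u : ℝ) ∂unif = ∑' p : ℕ × ℕ, min (1 - F p.1) (1 - G p.2) := by
  have hprod : ∀ᵐ u ∂unif, (qt F u : ℝ≥0∞) * qt G u
      = ∑' p : ℕ × ℕ, (Ioi (max (F p.1) (G p.2))).indicator 1 u := by
    filter_upwards [hF.ae_natCast_qt_eq_tsum_indicator, hG.ae_natCast_qt_eq_tsum_indicator]
      with u hFu hGu
    rw [hFu, hGu, ← ENNReal.tsum_mul_right, ENNReal.tsum_prod']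
    simp_rw [← ENNReal.tsum_mul_left, ← Ioi_inter_Ioi, inter_indicator_one, Pi.mul_apply]
  have hlint := integral_natCast_eq_toReal_lintegral (μ := unif)
    (f := fun u => qt F u * qt G u) ((measurable_qt F).mul (measurable_qt G))
  push_cast at hlint
  rw [hlint, lintegral_congr_ae hprod,
    lintegral_tsum_indicator_Ioi_unif fun p => (hF.nonneg _).trans (le_max_left _ _),
    ENNReal.tsum_toReal_eq fun _ => ofReal_ne_top]
  congr with p
  rw [toReal_ofReal (sub_nonneg.2 (max_le (hF.le_one _) (hG.le_one _))), min_sub_sub_left]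

end IsNatCdf

section PartialSums

variable {p : ℕ → ℝ}

theorem isNatCdf_sum_range_succ (hp0 : ∀ k, 0 ≤ p k) (hp : HasSum p 1) :
    IsNatCdf fun n => ∑ k ∈ Finset.range (n + 1), p k where
  mono _ _ hmn := Finset.sum_le_sum_of_subset_of_nonneg
    (Finset.range_subset_range.2 (by omega)) fun k _ _ => hp0 k
  nonneg _ := Finset.sum_nonneg fun k _ => hp0 k
  tendsto_one := hp.tendsto_sum_nat.comp (tendsto_add_atTop_nat 1)

theorem HasSum.ite_lt_one_sub_sum_range (hp : HasSum p 1) (n : ℕ) :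
    HasSum (fun k => if n < k then p k else 0) (1 - ∑ k ∈ Finset.range (n + 1), p k) := by
  have hhead := hasSum_sum_of_ne_finset_zero (L := .unconditional ℕ) (s := Finset.range (n + 1))
    (f := fun k => if k ∈ Finset.range (n + 1) then p k else 0) (by simp +contextual)
  rw [Finset.sum_ite_mem, Finset.inter_self] at hhead
  have hsplit : (fun k => if n < k then p k else 0)
      = fun k => p k - if k ∈ Finset.range (n + 1) then p k else 0 := by
    funext k
    by_cases hk : n < k
    · simp [hk, show ¬ k < n + 1 by omega]
    · simp [hk, show k < n + 1 by omega]
  rw [hsplit]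
  exact hp.sub hhead

theorem tsum_ofReal_one_sub_sum_range (hp0 : ∀ k, 0 ≤ p k) (hp : HasSum p 1) :
    ∑' n, ENNReal.ofReal (1 - ∑ k ∈ Finset.range (n + 1), p k) = ∑' k, k * ENNReal.ofReal (p k) :=
  calc _ = ∑' n, ∑' k, if n < k then ENNReal.ofReal (p k) else 0 := by
        congr with n
        rw [← (hp.ite_lt_one_sub_sum_range n).tsum_eq,
          ENNReal.ofReal_tsum_of_nonneg (fun k => by split_ifs <;> simp [hp0])
            (hp.ite_lt_one_sub_sum_range n).summable]
        congr with k
        split_ifs <;> simp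
    _ = _ := by simp_rw [ENNReal.tsum_comm (f := fun n k => if n < k then _ else _),
        ENNReal.tsum_ite_lt]

end PartialSums

section Poisson

variable {l : ℝ}

theorem poisPmf_nonneg (hl : 0 ≤ l) (n : ℕ) : 0 ≤ poisPmf l n := by
  unfold poisPmf
  positivity

theorem hasSum_poisPmf (hl : 0 ≤ l) : HasSum (poisPmf l) 1 :=
  ProbabilityTheory.hasSum_one_poissonMeasure ⟨l, hl⟩

theorem succ_mul_poisPmf_succ (l : ℝ) (n : ℕ) :
    (n + 1 : ℝ) * poisPmf l (n + 1) = l * poisPmf l n := by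
  simp only [poisPmf, Nat.factorial_succ, Nat.cast_mul, pow_succ]
  field_simp
  push_cast
  ring

theorem hasSum_mul_poisPmf (hl : 0 ≤ l) : HasSum (fun n => n * poisPmf l n) l := by
  rw [← hasSum_nat_add_iff' 1]
  simpa [succ_mul_poisPmf_succ] using (hasSum_poisPmf hl).mul_left l

theorem isNatCdf_poisCdf (hl : 0 ≤ l) : IsNatCdf (poisCdf l) :=
  isNatCdf_sum_range_succ (poisPmf_nonneg hl) (hasSum_poisPmf hl)

theorem tsum_ofReal_one_sub_poisCdf (hl : 0 ≤ l) :
    ∑' n, ENNReal.ofReal (1 - poisCdf l n) = ENNReal.ofReal l := by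
  have hmean := hasSum_mul_poisPmf hl
  calc _ = ∑' k, k * ENNReal.ofReal (poisPmf l k) :=
        tsum_ofReal_one_sub_sum_range (poisPmf_nonneg hl) (hasSum_poisPmf hl)
    _ = ENNReal.ofReal l := by
        simp_rw [← ofReal_natCast, ← ofReal_mul (Nat.cast_nonneg _)]
        rw [← ENNReal.ofReal_tsum_of_nonneg (fun k => mul_nonneg k.cast_nonneg
          (poisPmf_nonneg hl k)) hmean.summable, hmean.tsum_eq]

theorem integral_qt_poisCdf (hl : 0 ≤ l) : ∫ u, (qt (poisCdf l) u : ℝ) ∂unif = l := by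
  rw [integral_natCast_eq_toReal_lintegral (measurable_qt _),
    (isNatCdf_poisCdf hl).lintegral_qt_unif, tsum_ofReal_one_sub_poisCdf hl, toReal_ofReal hl]

end Poisson

/-- The covariance of a comonotonic pair of Poisson random variables with means `a` and `b`
equals `Σ_{m,n ≥ 0} min{Ḡ_a(m), Ḡ_b(n)} − a·b`. -/
theorem comonotonic_poisson_cov (a b : ℝ) (ha : 0 ≤ a) (hb : 0 ≤ b) :
    ∫ u, (qt (poisCdf a) u : ℝ) * (qt (poisCdf b) u : ℝ) ∂unif
        - (∫ u, (qt (poisCdf a) u : ℝ) ∂unif) * (∫ u, (qt (poisCdf b) u : ℝ) ∂unif)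
      = (∑' p : ℕ × ℕ, min (1 - poisCdf a p.1) (1 - poisCdf b p.2)) - a * b := by
  rw [(isNatCdf_poisCdf ha).integral_qt_mul_qt_unif (isNatCdf_poisCdf hb),
    integral_qt_poisCdf ha, integral_qt_poisCdf hb]
end

section
/- Let a, b ≥ 0, let (Ω, 𝓕, P) be a probability space, and let X, Y : Ω → ℕ be random variables with Poisson marginal laws: P(X = n) = e^{−a} a^n / n! and P(Y = n) = e^{−b} b^n / n! for all n ∈ ℕ, and such that X·Y is integrable. Then E[X·Y] − a·b ≤ Σ_{m=0}^{∞} Σ_{n=0}^{∞} min{Ḡ_a(m), Ḡ_b(n)} − a·b; that is, the covariance of any pair of Poisson random variables with means a and b is at most the covariance of the comonotonic Poisson pair with the same means. -/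
open MeasureTheory

/-!
For ℕ-valued `X, Y` one has `X * Y = ∑_{m,n} 1{m < X} 1{n < Y}`, so
`E[X Y] = ∑_{m,n} P(m < X, n < Y) ≤ ∑_{m,n} min (P(m < X)) (P(n < Y))`, and for Poisson marginals
these are the survival functions `Ḡ_a(m)`, `Ḡ_b(n)`. The right-hand series converges because
`Ḡ_a(n) ≤ a^(n+1)/(n+1)! ≤ e^(4a) 4^(-n)`, so its terms are `O(2^(-m) 2^(-n))`; without
convergence its `tsum` would be `0`.
-/

open Set
open scoped ENNReal Nat

section LayerCake

lemma tsum_indicator_Iio_prod_Iio (j k : ℕ) :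
    ∑' p : ℕ × ℕ, (Iio j ×ˢ Iio k).indicator (1 : ℕ × ℕ → ℝ≥0∞) p = j * k := by
  simp [← tsum_subtype]

variable {Ω : Type*} [MeasurableSpace Ω] (μ : Measure Ω) {X Y : Ω → ℕ}

lemma lintegral_natCast_mul_eq_tsum (hX : Measurable X) (hY : Measurable Y) :
    ∫⁻ w, (X w : ℝ≥0∞) * Y w ∂μ = ∑' p : ℕ × ℕ, μ {w | p.1 < X w ∧ p.2 < Y w} := by
  have hmeas (p : ℕ × ℕ) : MeasurableSet {w | p.1 < X w ∧ p.2 < Y w} :=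
    (hX measurableSet_Ioi).inter (hY measurableSet_Ioi)
  have hpoint (w : Ω) : (X w : ℝ≥0∞) * Y w
      = ∑' p : ℕ × ℕ, {w | p.1 < X w ∧ p.2 < Y w}.indicator 1 w := by
    rw [← tsum_indicator_Iio_prod_Iio]
    congr! 1 with p
  simp_rw [hpoint]
  rw [lintegral_tsum fun p => (measurable_one.indicator (hmeas p)).aemeasurable]
  exact tsum_congr fun p => lintegral_indicator_one (hmeas p)

lemma lintegral_natCast_mul_le_tsum_min (hX : Measurable X) (hY : Measurable Y) :
    ∫⁻ w, (X w : ℝ≥0∞) * Y w ∂μ ≤ ∑' p : ℕ × ℕ, min (μ {w | p.1 < X w}) (μ {w | p.2 < Y w}) := by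
  rw [lintegral_natCast_mul_eq_tsum μ hX hY]
  exact ENNReal.tsum_le_tsum fun p =>
    le_min (measure_mono fun _ h => h.1) (measure_mono fun _ h => h.2)

end LayerCake

lemma summable_min_of_le_geometric {x y : ℕ → ℝ} {C r : ℝ} (hr₀ : 0 ≤ r) (hr₁ : r < 1)
    (hx₀ : ∀ m, 0 ≤ x m) (hy₀ : ∀ n, 0 ≤ y n)
    (hx : ∀ m, x m ≤ C * r ^ (2 * m)) (hy : ∀ n, y n ≤ C * r ^ (2 * n)) :
    Summable fun p : ℕ × ℕ => min (x p.1) (y p.2) := by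
  have hC : 0 ≤ C := by simpa using (hx₀ 0).trans (hx 0)
  have hgeom : Summable fun p : ℕ × ℕ => C * (r ^ p.1 * r ^ p.2) :=
    ((summable_geometric_of_lt_one hr₀ hr₁).mul_of_nonneg
      (summable_geometric_of_lt_one hr₀ hr₁) (pow_nonneg hr₀) (pow_nonneg hr₀)).mul_left C
  refine hgeom.of_nonneg_of_le (fun p => le_min (hx₀ _) (hy₀ _)) fun ⟨m, n⟩ => ?_
  -- `r ^ (2 * max m n) ≤ r ^ m * r ^ n`
  rcases le_total m n with hmn | hnm
  · calc min (x m) (y n) ≤ C * (r ^ n * r ^ n) :=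
          (min_le_right _ _).trans (by rw [← pow_add, ← two_mul]; exact hy n)
      _ ≤ C * (r ^ m * r ^ n) := by
          gcongr C * (?_ * _); exact pow_le_pow_of_le_one hr₀ hr₁.le hmn
  · calc min (x m) (y n) ≤ C * (r ^ m * r ^ m) :=
          (min_le_left _ _).trans (by rw [← pow_add, ← two_mul]; exact hx m)
      _ ≤ C * (r ^ m * r ^ n) := by
          gcongr C * (_ * ?_); exact pow_le_pow_of_le_one hr₀ hr₁.le hnm

lemma poisPmf_nonneg_s7 {a : ℝ} (ha : 0 ≤ a) (n : ℕ) : 0 ≤ poisPmf a n := by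
  unfold poisPmf; positivity

lemma hasSum_poisPmf_s7 (a : ℝ) : HasSum (poisPmf a) 1 := by
  have h := (NormedSpace.expSeries_div_hasSum_exp a).mul_left (Real.exp (-a))
  rw [← congrFun Real.exp_eq_exp_ℝ, ← Real.exp_add, neg_add_cancel, Real.exp_zero] at h
  simp only [← mul_div_assoc] at h
  exact h

lemma poisCdf_eq_sum_poisPmf (a : ℝ) (n : ℕ) :
    poisCdf a n = ∑ k ∈ Finset.range (n + 1), poisPmf a k := rfl

lemma poisCdf_nonneg {a : ℝ} (ha : 0 ≤ a) (n : ℕ) : 0 ≤ poisCdf a n :=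
  Finset.sum_nonneg fun k _ => poisPmf_nonneg_s7 ha k

lemma one_sub_poisCdf_eq_tsum (a : ℝ) (n : ℕ) :
    1 - poisCdf a n = ∑' k, poisPmf a (k + (n + 1)) := by
  rw [← (hasSum_poisPmf_s7 a).tsum_eq, poisCdf_eq_sum_poisPmf,
    ← (hasSum_poisPmf_s7 a).summable.sum_add_tsum_nat_add (n + 1), add_sub_cancel_left]

lemma one_sub_poisCdf_nonneg {a : ℝ} (ha : 0 ≤ a) (n : ℕ) : 0 ≤ 1 - poisCdf a n := by
  rw [one_sub_poisCdf_eq_tsum a]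
  exact tsum_nonneg fun k => poisPmf_nonneg_s7 ha _

lemma poisPmf_add_le {a : ℝ} (ha : 0 ≤ a) (k n : ℕ) :
    poisPmf a (k + n) ≤ a ^ n / n ! * poisPmf a k := by
  have hfac : (k ! * n ! : ℝ) ≤ (k + n)! := by
    exact_mod_cast Nat.le_of_dvd (Nat.factorial_pos _)
      (Nat.factorial_mul_factorial_dvd_factorial_add k n)
  calc poisPmf a (k + n) = Real.exp (-a) * a ^ (k + n) / (k + n)! := rfl
    _ ≤ Real.exp (-a) * a ^ (k + n) / (k ! * n !) := by gcongr
    _ = a ^ n / n ! * poisPmf a k := by unfold poisPmf; ring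

lemma one_sub_poisCdf_le_pow_div_factorial {a : ℝ} (ha : 0 ≤ a) (n : ℕ) :
    1 - poisCdf a n ≤ a ^ (n + 1) / (n + 1)! := by
  have hsum := hasSum_poisPmf_s7 a
  calc 1 - poisCdf a n = ∑' k, poisPmf a (k + (n + 1)) := one_sub_poisCdf_eq_tsum a n
    _ ≤ ∑' k, a ^ (n + 1) / (n + 1)! * poisPmf a k :=
        ((summable_nat_add_iff (n + 1)).2 hsum.summable).tsum_le_tsum (poisPmf_add_le ha · _)
          (hsum.summable.mul_left _)
    _ = a ^ (n + 1) / (n + 1)! := by rw [tsum_mul_left, hsum.tsum_eq, mul_one]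

lemma one_sub_poisCdf_le_geometric {a : ℝ} (ha : 0 ≤ a) (n : ℕ) :
    1 - poisCdf a n ≤ Real.exp (4 * a) * (1 / 2) ^ (2 * n) :=
  calc 1 - poisCdf a n ≤ a ^ (n + 1) / (n + 1)! := one_sub_poisCdf_le_pow_div_factorial ha n
    _ = (4 * a) ^ (n + 1) / (n + 1)! / 4 ^ (n + 1) := by
        rw [mul_pow, mul_div_assoc, mul_div_cancel_left₀ _ (by positivity)]
    _ ≤ Real.exp (4 * a) / 4 ^ n := by
        gcongr
        · exact Real.pow_div_factorial_le_exp (x := 4 * a) (by positivity) _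
        · norm_num
        · exact n.le_succ
    _ = Real.exp (4 * a) * (1 / 2) ^ (2 * n) := by
        rw [pow_mul, div_eq_mul_inv, ← inv_pow]; norm_num

lemma summable_min_one_sub_poisCdf {a b : ℝ} (ha : 0 ≤ a) (hb : 0 ≤ b) :
    Summable fun p : ℕ × ℕ => min (1 - poisCdf a p.1) (1 - poisCdf b p.2) := by
  have hle {c C : ℝ} (hc : 0 ≤ c) (hcC : Real.exp (4 * c) ≤ C) (n : ℕ) :
      1 - poisCdf c n ≤ C * (1 / 2) ^ (2 * n) :=
    (one_sub_poisCdf_le_geometric hc n).trans (by gcongr)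
  exact summable_min_of_le_geometric (x := (1 - poisCdf a ·)) (y := (1 - poisCdf b ·))
    (by norm_num) (by norm_num) (one_sub_poisCdf_nonneg ha) (one_sub_poisCdf_nonneg hb)
    (hle ha (le_max_left _ (Real.exp (4 * b))))
    (hle hb (le_max_right (Real.exp (4 * a)) _))

lemma measure_lt_eq_ofReal_one_sub_poisCdf {Ω : Type*} [MeasurableSpace Ω] (P : Measure Ω)
    [IsProbabilityMeasure P] {a : ℝ} (ha : 0 ≤ a) {X : Ω → ℕ} (hX : Measurable X)
    (hlaw : ∀ n : ℕ, P {w | X w = n} = ENNReal.ofReal (poisPmf a n)) (m : ℕ) :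
    P {w | m < X w} = ENNReal.ofReal (1 - poisCdf a m) := by
  have hcdf : P {w | X w ≤ m} = ENNReal.ofReal (poisCdf a m) := by
    have hset : {w | X w ≤ m} = X ⁻¹' ↑(Finset.range (m + 1)) := by
      ext w; simp
    rw [hset, ← sum_measure_preimage_singleton _ fun n _ => hX (measurableSet_singleton n),
      poisCdf_eq_sum_poisPmf, ENNReal.ofReal_sum_of_nonneg fun k _ => poisPmf_nonneg_s7 ha k]
    exact Finset.sum_congr rfl fun n _ => hlaw n
  have hcompl : {w | m < X w} = {w | X w ≤ m}ᶜ := by ext w; simp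
  have hmeas : MeasurableSet {w | X w ≤ m} := hX measurableSet_Iic
  rw [hcompl, prob_compl_eq_one_sub hmeas, hcdf,
    ENNReal.ofReal_sub _ (poisCdf_nonneg ha m), ENNReal.ofReal_one]

theorem poisson_cov_le_comonotonic_general {Ω : Type*} [MeasurableSpace Ω]
    (P : Measure Ω) [IsProbabilityMeasure P]
    (a b : ℝ) (ha : 0 ≤ a) (hb : 0 ≤ b)
    (X Y : Ω → ℕ) (hX : Measurable X) (hY : Measurable Y)
    (hlawX : ∀ n : ℕ, P {w | X w = n} = ENNReal.ofReal (poisPmf a n))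
    (hlawY : ∀ n : ℕ, P {w | Y w = n} = ENNReal.ofReal (poisPmf b n)) :
    ∫ w, (X w : ℝ) * (Y w : ℝ) ∂P - a * b
      ≤ (∑' p : ℕ × ℕ, min (1 - poisCdf a p.1) (1 - poisCdf b p.2)) - a * b := by
  have hsum := summable_min_one_sub_poisCdf ha hb
  have hnonneg (p : ℕ × ℕ) : 0 ≤ min (1 - poisCdf a p.1) (1 - poisCdf b p.2) :=
    le_min (one_sub_poisCdf_nonneg ha _) (one_sub_poisCdf_nonneg hb _)
  rw [integral_eq_lintegral_of_nonneg_ae (.of_forall fun w => by positivity) (by fun_prop)]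
  refine sub_le_sub_right (ENNReal.toReal_le_of_le_ofReal (tsum_nonneg hnonneg) ?_) _
  calc ∫⁻ w, ENNReal.ofReal ((X w : ℝ) * Y w) ∂P = ∫⁻ w, (X w : ℝ≥0∞) * Y w ∂P := by
        simp_rw [ENNReal.ofReal_mul (Nat.cast_nonneg _), ENNReal.ofReal_natCast]
    _ ≤ ∑' p : ℕ × ℕ, min (P {w | p.1 < X w}) (P {w | p.2 < Y w}) :=
        lintegral_natCast_mul_le_tsum_min P hX hY
    _ = ENNReal.ofReal (∑' p : ℕ × ℕ, min (1 - poisCdf a p.1) (1 - poisCdf b p.2)) := by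
        simp_rw [measure_lt_eq_ofReal_one_sub_poisCdf P ha hX hlawX,
          measure_lt_eq_ofReal_one_sub_poisCdf P hb hY hlawY, ← ENNReal.ofReal_min]
        exact (ENNReal.ofReal_tsum_of_nonneg hnonneg hsum).symm

/-- The covariance of any pair of Poisson random variables with means `a` and `b` is at most
the covariance of the comonotonic Poisson pair with the same means. -/
theorem poisson_cov_le_comonotonic {Ω : Type*} [MeasurableSpace Ω]
    (P : Measure Ω) [IsProbabilityMeasure P]
    (a b : ℝ) (ha : 0 ≤ a) (hb : 0 ≤ b)
    (X Y : Ω → ℕ) (hX : Measurable X) (hY : Measurable Y)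
    (hlawX : ∀ n : ℕ, P {w | X w = n} = ENNReal.ofReal (poisPmf a n))
    (hlawY : ∀ n : ℕ, P {w | Y w = n} = ENNReal.ofReal (poisPmf b n))
    (hint : Integrable (fun w => (X w : ℝ) * (Y w : ℝ)) P) :
    ∫ w, (X w : ℝ) * (Y w : ℝ) ∂P - a * b
      ≤ (∑' p : ℕ × ℕ, min (1 - poisCdf a p.1) (1 - poisCdf b p.2)) - a * b :=
  poisson_cov_le_comonotonic_general P a b ha hb X Y hX hY hlawX hlawY
end

section
/- Bivariate model cdf: let λ_1, λ_2 > 0 and ω ∈ [0,1], and on (0,1)^2 with the product measure μ^2 define X_1(u,v) = q_{λ_1}(u) and X_2(u,v) = q_{ωλ_2}(u) + q_{(1−ω)λ_2}(v). Then for all x_1, x_2 ∈ ℕ, μ^2{(u,v) : X_1 ≤ x_1, X_2 ≤ x_2} = Σ_{z=0}^{x_2} min{G_{λ_1}(x_1), G_{ωλ_2}(x_2 − z)} · g_{(1−ω)λ_2}(z), where g_θ(z) = e^{−θ} θ^z / z!. -/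
open MeasureTheory

lemma poisPmf_nonneg_s17 {L : ℝ} (hL : 0 ≤ L) (n : ℕ) : 0 ≤ poisPmf L n := by
  unfold poisPmf; positivity

lemma poisCdf_eq_sum (L : ℝ) (n : ℕ) :
    poisCdf L n = ∑ k ∈ Finset.range (n + 1), poisPmf L k := rfl

lemma poisCdf_nonneg_s17 {L : ℝ} (hL : 0 ≤ L) (n : ℕ) : 0 ≤ poisCdf L n := by
  rw [poisCdf_eq_sum]
  exact Finset.sum_nonneg fun k _ => poisPmf_nonneg_s17 hL k

lemma poisCdf_mono {L : ℝ} (hL : 0 ≤ L) : Monotone (poisCdf L) := by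
  apply monotone_nat_of_le_succ
  intro n
  rw [poisCdf_eq_sum, poisCdf_eq_sum, Finset.sum_range_succ (n := n + 1)]
  have := poisPmf_nonneg_s17 hL (n + 1); linarith

lemma hasSum_poisPmf_s17 {L : ℝ} (hL : 0 ≤ L) : HasSum (poisPmf L) 1 := by
  have h := ProbabilityTheory.poissonPMFRealSum ⟨L, hL⟩
  exact h

lemma poisCdf_le_one {L : ℝ} (hL : 0 ≤ L) (n : ℕ) : poisCdf L n ≤ 1 := by
  rw [poisCdf_eq_sum]
  exact sum_le_hasSum _ (fun k _ => poisPmf_nonneg_s17 hL k) (hasSum_poisPmf_s17 hL)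

open Filter in
lemma poisCdf_tendsto_one {L : ℝ} (hL : 0 ≤ L) :
    Tendsto (poisCdf L) atTop (nhds 1) := by
  have hs := (hasSum_poisPmf_s17 hL).tendsto_sum_nat
  have := hs.comp (tendsto_add_atTop_nat 1)
  exact this

lemma exists_le_poisCdf {L u : ℝ} (hL : 0 ≤ L) (hu : u < 1) :
    ∃ m, u ≤ poisCdf L m := by
  have h := (poisCdf_tendsto_one hL).eventually (eventually_gt_nhds hu)
  obtain ⟨m, hm⟩ := h.exists
  exact ⟨m, hm.le⟩

lemma qt_le_iff_s17 {F : ℕ → ℝ} (hF : Monotone F) {u : ℝ} (hne : ∃ m, u ≤ F m) (n : ℕ) :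
    qt F u ≤ n ↔ u ≤ F n := by
  constructor
  · intro h
    have hmem : qt F u ∈ {n | u ≤ F n} := Nat.sInf_mem hne
    exact le_trans hmem (hF h)
  · intro h
    exact Nat.sInf_le h

lemma qt_eq_iff {F : ℕ → ℝ} (hF : Monotone F) {u : ℝ} (hu0 : 0 < u)
    (hne : ∃ m, u ≤ F m) (z : ℕ) :
    qt F u = z ↔ cdfm1 F z < u ∧ u ≤ F z := by
  cases z with
  | zero =>
      rw [show cdfm1 F 0 = (0:ℝ) from rfl, ← Nat.le_zero, qt_le_iff_s17 hF hne]
      exact ⟨fun h => ⟨hu0, h⟩, fun h => h.2⟩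
  | succ n =>
      simp only [cdfm1, Nat.succ_ne_zero, if_false, Nat.succ_sub_one]
      have h1 := qt_le_iff_s17 hF hne (n + 1)
      have h2 := qt_le_iff_s17 hF hne n
      constructor
      · intro h
        refine ⟨?_, h1.mp h.le⟩
        by_contra hc
        push_neg at hc
        have := h2.mpr hc
        omega
      · rintro ⟨ha, hb⟩
        have hle := h1.mpr hb
        have hgt : ¬ qt F u ≤ n := fun hc => absurd (h2.mp hc) (not_le.mpr ha)
        omega

lemma vol_Ioo_inter_Ioc {a b : ℝ} (ha : 0 ≤ a) (hb : b ≤ 1) :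
    volume (Set.Ioo 0 1 ∩ Set.Ioc a b) = ENNReal.ofReal (b - a) := by
  apply le_antisymm
  · calc volume (Set.Ioo 0 1 ∩ Set.Ioc a b) ≤ volume (Set.Ioc a b) :=
          measure_mono Set.inter_subset_right
      _ = ENNReal.ofReal (b - a) := Real.volume_Ioc
  · rw [← Real.volume_Ioo (a := a) (b := b)]
    apply measure_mono
    intro x hx
    exact ⟨⟨lt_of_le_of_lt ha hx.1, lt_of_lt_of_le hx.2 hb⟩, ⟨hx.1, hx.2.le⟩⟩

lemma cdf_sub_cdfm1 (L : ℝ) (z : ℕ) :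
    poisCdf L z - cdfm1 (poisCdf L) z = poisPmf L z := by
  cases z with
  | zero => simp [cdfm1, poisCdf_eq_sum]
  | succ n =>
      simp only [cdfm1, Nat.succ_ne_zero, if_false, Nat.succ_sub_one,
        poisCdf_eq_sum, Finset.sum_range_succ (n := n + 1)]
      ring

/-- Bivariate MP model cdf: with `X₁(u,v) = q_{λ₁}(u)` and
`X₂(u,v) = q_{ωλ₂}(u) + q_{(1−ω)λ₂}(v)` on (0,1)² with the product uniform measure,
`P(X₁ ≤ x₁, X₂ ≤ x₂) = Σ_{z=0}^{x₂} min{G_{λ₁}(x₁), G_{ωλ₂}(x₂ − z)} g_{(1−ω)λ₂}(z)`. -/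
theorem mp2_cdf (l1 l2 : ℝ) (hl1 : 0 < l1) (hl2 : 0 < l2)
    (w : ℝ) (hw0 : 0 ≤ w) (hw1 : w ≤ 1) (x1 x2 : ℕ) :
    (unif.prod unif) {p : ℝ × ℝ |
        qt (poisCdf l1) p.1 ≤ x1 ∧
        qt (poisCdf (w * l2)) p.1 + qt (poisCdf ((1 - w) * l2)) p.2 ≤ x2}
      = ENNReal.ofReal (∑ z ∈ Finset.range (x2 + 1),
          min (poisCdf l1 x1) (poisCdf (w * l2) (x2 - z))
            * poisPmf ((1 - w) * l2) z) := by
  have h1 : (0:ℝ) ≤ l1 := hl1.le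
  have h2 : (0:ℝ) ≤ w * l2 := mul_nonneg hw0 hl2.le
  have h3 : (0:ℝ) ≤ (1 - w) * l2 := mul_nonneg (by linarith) hl2.le
  set G1 := poisCdf l1 with hG1
  set G2 := poisCdf (w * l2) with hG2
  set G3 := poisCdf ((1 - w) * l2) with hG3
  rw [unif, Measure.prod_restrict,
    Measure.restrict_apply' (measurableSet_Ioo.prod measurableSet_Ioo)]
  have hset : {p : ℝ × ℝ | qt G1 p.1 ≤ x1 ∧ qt G2 p.1 + qt G3 p.2 ≤ x2}
        ∩ (Set.Ioo 0 1 ×ˢ Set.Ioo 0 1)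
      = ⋃ z ∈ Finset.range (x2 + 1),
          (Set.Ioo 0 1 ∩ Set.Ioc 0 (min (G1 x1) (G2 (x2 - z)))) ×ˢ
          (Set.Ioo 0 1 ∩ Set.Ioc (cdfm1 G3 z) (G3 z)) := by
    ext ⟨u, v⟩
    simp only [Set.mem_inter_iff, Set.mem_setOf_eq, Set.mem_prod, Set.mem_iUnion,
      Finset.mem_range, Set.mem_Ioo, Set.mem_Ioc, le_min_iff]
    constructor
    · rintro ⟨⟨hq1, hq2⟩, hu, hv⟩
      refine ⟨qt G3 v, by omega, ⟨hu, hu.1, ?_, ?_⟩, hv, ?_⟩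
      · exact (qt_le_iff_s17 (poisCdf_mono h1) (exists_le_poisCdf h1 hu.2) x1).mp hq1
      · exact (qt_le_iff_s17 (poisCdf_mono h2) (exists_le_poisCdf h2 hu.2) _).mp (Nat.le_sub_of_add_le hq2)
      · exact ((qt_eq_iff (poisCdf_mono h3) hv.1 (exists_le_poisCdf h3 hv.2) _).mp rfl)
    · rintro ⟨z, hz, ⟨hu, _, hu1, hu2⟩, hv, hv2⟩
      have hqv : qt G3 v = z :=
        (qt_eq_iff (poisCdf_mono h3) hv.1 (exists_le_poisCdf h3 hv.2) z).mpr hv2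
      have hq1 : qt G1 u ≤ x1 :=
        (qt_le_iff_s17 (poisCdf_mono h1) (exists_le_poisCdf h1 hu.2) x1).mpr hu1
      have hq2 : qt G2 u ≤ x2 - z :=
        (qt_le_iff_s17 (poisCdf_mono h2) (exists_le_poisCdf h2 hu.2) _).mpr hu2
      exact ⟨⟨hq1, by omega⟩, hu, hv⟩
  rw [hset]
  have hdisj : (↑(Finset.range (x2 + 1)) : Set ℕ).PairwiseDisjoint
      (fun z => (Set.Ioo 0 1 ∩ Set.Ioc 0 (min (G1 x1) (G2 (x2 - z)))) ×ˢ
          (Set.Ioo 0 1 ∩ Set.Ioc (cdfm1 G3 z) (G3 z))) := by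
    intro z _ z' _ hzz'
    apply Set.disjoint_left.mpr
    rintro ⟨u, v⟩ ⟨_, hv⟩ ⟨_, hv'⟩
    have e1 : qt G3 v = z :=
      (qt_eq_iff (poisCdf_mono h3) hv.1.1 (exists_le_poisCdf h3 hv.1.2) z).mpr hv.2
    have e2 : qt G3 v = z' :=
      (qt_eq_iff (poisCdf_mono h3) hv'.1.1 (exists_le_poisCdf h3 hv'.1.2) z').mpr hv'.2
    exact hzz' (e1 ▸ e2)
  rw [measure_biUnion_finset hdisj (fun z _ =>
    (measurableSet_Ioo.inter measurableSet_Ioc).prod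
      (measurableSet_Ioo.inter measurableSet_Ioc))]
  rw [ENNReal.ofReal_sum_of_nonneg (fun z _ =>
    mul_nonneg (le_min (poisCdf_nonneg_s17 h1 x1) (poisCdf_nonneg_s17 h2 _)) (poisPmf_nonneg_s17 h3 z))]
  refine Finset.sum_congr rfl fun z hz => ?_
  rw [Measure.prod_prod,
    vol_Ioo_inter_Ioc le_rfl (min_le_of_left_le (poisCdf_le_one h1 x1)),
    vol_Ioo_inter_Ioc (by
      cases z with
      | zero => simp [cdfm1]
      | succ n => simpa [cdfm1] using poisCdf_nonneg_s17 h3 n) (poisCdf_le_one h3 z),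
    cdf_sub_cdfm1, sub_zero,
    ← ENNReal.ofReal_mul (le_min (poisCdf_nonneg_s17 h1 x1) (poisCdf_nonneg_s17 h2 _))]
end
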